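/- arXiv:math/0503242 — 3 statements merged into one kernel-verified Lean document; each statement's English description precedes it below -/
import Mathlib

section
/- Every nontrivial variety contains a nontrivial fluid subvariety. -/
/-- A similarity type: operation symbols with arities. -/
structure Signature where
  I : Type
  arity : I → ℕ

/-- Terms of a signature over a variable type. -/
inductive Term (sig : Signature) (V : Type) : Type
  | var : V → Term sig V
  | app : (i : sig.I) → (Fin (sig.arity i) → Term sig V) → Term sig V

/-- Substitution of terms for variables. -/
def Term.bind {sig : Signature} {V W : Type} : Term sig V → (V → Term sig W) → Term sig W
  | .var v, f => f v
  | .app i ts, f => .app i (fun k => (ts k).bind f)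

/-- An algebra of a signature (with nonempty carrier). -/
structure Alg (sig : Signature) where
  carrier : Type
  interp : (i : sig.I) → (Fin (sig.arity i) → carrier) → carrier
  nonempty : Nonempty carrier

/-- Evaluation of a term in an algebra under an assignment. -/
def Alg.eval {sig : Signature} {V : Type} (A : Alg sig) (v : V → A.carrier) :
    Term sig V → A.carrier
  | .var x => v x
  | .app i ts => A.interp i (fun k => A.eval v (ts k))

/-- A hypersubstitution assigns to each operation symbol a term of the same arity. -/
abbrev Hyp (sig : Signature) := (i : sig.I) → Term sig (Fin (sig.arity i))

/-- The extension of a hypersubstitution to all terms. -/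
def hypApply {sig : Signature} {V : Type} (σ : Hyp sig) : Term sig V → Term sig V
  | .var x => .var x
  | .app i ts => (σ i).bind (fun k => hypApply σ (ts k))

/-- The derived algebra `A_σ`. -/
def derive {sig : Signature} (σ : Hyp sig) (A : Alg sig) : Alg sig :=
  ⟨A.carrier, fun i args => A.eval args (σ i), A.nonempty⟩

/-- An identity `p = q` holds in an algebra. -/
def Satisfies {sig : Signature} (A : Alg sig) (e : Term sig ℕ × Term sig ℕ) : Prop :=
  ∀ v : ℕ → A.carrier, A.eval v e.1 = A.eval v e.2

/-- Models of a set of identities. -/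
def Models {sig : Signature} (E : Set (Term sig ℕ × Term sig ℕ)) : Set (Alg sig) :=
  {A | ∀ e ∈ E, Satisfies A e}

/-- Equational theory of a class of algebras. -/
def Th {sig : Signature} (K : Set (Alg sig)) : Set (Term sig ℕ × Term sig ℕ) :=
  {e | ∀ A ∈ K, Satisfies A e}

/-- The variety generated by a class. -/
def varGen {sig : Signature} (K : Set (Alg sig)) : Set (Alg sig) := Models (Th K)

/-- A class is a variety iff it is an equational class. -/
def IsVariety {sig : Signature} (V : Set (Alg sig)) : Prop := ∃ E, V = Models E

/-- The derived variety `V_σ`. -/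
def derivedVariety {sig : Signature} (V : Set (Alg sig)) (σ : Hyp sig) : Set (Alg sig) :=
  varGen {B | ∃ A ∈ V, B = derive σ A}

/-- A class is trivial if all its algebras are one-element. -/
def TrivialVar {sig : Signature} (V : Set (Alg sig)) : Prop :=
  ∀ A ∈ V, Subsingleton A.carrier

/-- A variety is fluid if it contains no proper derived variety. -/
def Fluid {sig : Signature} (V : Set (Alg sig)) : Prop :=
  ∀ σ : Hyp sig, derivedVariety V σ ⊆ V → derivedVariety V σ = V

/-- The signature with one binary operation symbol. -/
def sig2 : Signature := ⟨Unit, fun _ => 2⟩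

/-- The binary operation of a `sig2`-algebra. -/
def bop (A : Alg sig2) (x y : A.carrier) : A.carrier := A.interp () ![x, y]

/-- The hypersubstitution sending `x·y` to the first projection `x`. -/
def proj1 : Hyp sig2 := fun _ => Term.var ⟨0, by simp [sig2]⟩

/-- The variety of bands (idempotent semigroups). -/
def Bands : Set (Alg sig2) :=
  {A | (∀ x y z, bop A (bop A x y) z = bop A x (bop A y z)) ∧ (∀ x, bop A x x = x)}

/-- The variety of left-zero semigroups. -/
def LeftZero : Set (Alg sig2) := {A | ∀ x y, bop A x y = x}

/-!
Among the sets of identities containing `Th V` whose models are not all trivial, Zorn's lemma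
gives a maximal one `M`: derivations use only finitely many identities, so the union of a chain
cannot derive `x₀ = x₁` unless a member of the chain does. Then `Models M` is a minimal
nontrivial variety below `V`. A minimal variety is fluid, because a derived algebra `A_σ` has
the same carrier as `A`, so a derived variety of a nontrivial variety is again nontrivial.
-/

section Minimal

variable {sig : Signature}

inductive Derivable (E : Set (Term sig ℕ × Term sig ℕ)) : Term sig ℕ → Term sig ℕ → Prop
  | ax {p q : Term sig ℕ} (f : ℕ → Term sig ℕ) (h : (p, q) ∈ E) :
      Derivable E (p.bind f) (q.bind f)
  | refl (p : Term sig ℕ) : Derivable E p p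
  | symm {p q} : Derivable E p q → Derivable E q p
  | trans {p q r} : Derivable E p q → Derivable E q r → Derivable E p r
  | app (i : sig.I) {ts us : Fin (sig.arity i) → Term sig ℕ}
      (h : ∀ k, Derivable E (ts k) (us k)) : Derivable E (.app i ts) (.app i us)

theorem Alg.eval_bind {V W : Type} (A : Alg sig) (v : W → A.carrier) (t : Term sig V)
    (f : V → Term sig W) :
    A.eval v (t.bind f) = A.eval (fun x => A.eval v (f x)) t := by
  induction t with
  | var x => rfl
  | app i ts ih => exact congrArg (A.interp i) (funext ih)

namespace Derivable

variable {E F : Set (Term sig ℕ × Term sig ℕ)} {p q : Term sig ℕ}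

theorem satisfies {A : Alg sig} (hA : A ∈ Models E) (h : Derivable E p q) :
    Satisfies A (p, q) := by
  induction h with
  | ax f hpq => intro v; simp only [Alg.eval_bind]; exact hA _ hpq _
  | refl p => intro v; rfl
  | symm _ ih => intro v; exact (ih v).symm
  | trans _ _ ih₁ ih₂ => intro v; exact (ih₁ v).trans (ih₂ v)
  | app i _ ih => intro v; exact congrArg (A.interp i) (funext fun k => ih k v)

theorem mono (hEF : E ⊆ F) (h : Derivable E p q) : Derivable F p q := by
  induction h with
  | ax f hpq => exact .ax f (hEF hpq)
  | refl p => exact .refl p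
  | symm _ ih => exact ih.symm
  | trans _ _ ih₁ ih₂ => exact ih₁.trans ih₂
  | app i _ ih => exact .app i ih

theorem exists_finite (h : Derivable E p q) :
    ∃ s ⊆ E, s.Finite ∧ Derivable s p q := by
  induction h with
  | @ax p q f hpq => exact ⟨{(p, q)}, by simpa using hpq, Set.finite_singleton _, .ax f rfl⟩
  | refl p => exact ⟨∅, Set.empty_subset _, Set.finite_empty, .refl p⟩
  | symm _ ih =>
      obtain ⟨s, hsE, hs, h⟩ := ih
      exact ⟨s, hsE, hs, h.symm⟩
  | trans _ _ ih₁ ih₂ =>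
      obtain ⟨s, hsE, hs, h₁⟩ := ih₁
      obtain ⟨t, htE, ht, h₂⟩ := ih₂
      exact ⟨s ∪ t, Set.union_subset hsE htE, hs.union ht,
        (h₁.mono Set.subset_union_left).trans (h₂.mono Set.subset_union_right)⟩
  | app i _ ih =>
      choose s hsE hs h using ih
      exact ⟨⋃ k, s k, Set.iUnion_subset hsE, Set.finite_iUnion hs,
        .app i fun k => (h k).mono (Set.subset_iUnion s k)⟩

theorem exists_mem_of_sUnion {c : Set (Set (Term sig ℕ × Term sig ℕ))}
    (hc : IsChain (· ⊆ ·) c) (hne : c.Nonempty) (h : Derivable (⋃₀ c) p q) :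
    ∃ F ∈ c, Derivable F p q := by
  obtain ⟨s, hsc, hs, hd⟩ := h.exists_finite
  obtain ⟨F, hF, hsF⟩ := hc.directedOn.exists_mem_subset_of_finite_of_subset_sUnion hne hs hsc
  exact ⟨F, hF, hd.mono hsF⟩

end Derivable

def derivableSetoid (E : Set (Term sig ℕ × Term sig ℕ)) : Setoid (Term sig ℕ) :=
  ⟨Derivable E, ⟨Derivable.refl, Derivable.symm, Derivable.trans⟩⟩

noncomputable def freeAlg (E : Set (Term sig ℕ × Term sig ℕ)) : Alg sig where
  carrier := Quotient (derivableSetoid E)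
  interp i args := Quotient.mk _ (.app i fun k => (args k).out)
  nonempty := ⟨Quotient.mk _ (.var 0)⟩

theorem freeAlg_eval (E : Set (Term sig ℕ × Term sig ℕ)) (f : ℕ → Term sig ℕ)
    (t : Term sig ℕ) :
    (freeAlg E).eval (fun n => Quotient.mk _ (f n)) t = Quotient.mk _ (t.bind f) := by
  induction t with
  | var x => rfl
  | app i ts ih =>
      show Quotient.mk _ _ = _
      refine Quotient.sound (Derivable.app i fun k => ?_)
      simp only [ih]
      exact Quotient.mk_out (s := derivableSetoid E) ((ts k).bind f)

theorem freeAlg_mem_models (E : Set (Term sig ℕ × Term sig ℕ)) : freeAlg E ∈ Models E := by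
  intro e he v
  have hv : v = fun n => Quotient.mk _ (v n).out := funext fun n => (Quotient.out_eq _).symm
  rw [hv, freeAlg_eval, freeAlg_eval]
  exact Quotient.sound (Derivable.ax _ he)

theorem trivialVar_models_iff (E : Set (Term sig ℕ × Term sig ℕ)) :
    TrivialVar (Models E) ↔ Derivable E (.var 0) (.var 1) := by
  constructor
  · intro h
    exact Quotient.exact ((h _ (freeAlg_mem_models E)).elim (Quotient.mk _ (.var 0))
      (Quotient.mk _ (.var 1)))
  · refine fun h A hA => ⟨fun a b => ?_⟩
    simpa [Alg.eval] using h.satisfies hA (fun n => if n = 0 then a else b)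

theorem models_th_of_isVariety {V : Set (Alg sig)} (hV : IsVariety V) : Models (Th V) = V := by
  obtain ⟨E, rfl⟩ := hV
  exact Set.Subset.antisymm (fun _ hA e he => hA e fun _ hB => hB e he)
    (fun A hA e he => he A hA)

theorem models_antitone : Antitone (Models (sig := sig)) :=
  fun _ _ h _ hA e he => hA e (h he)

theorem exists_maximal_nontrivial_models {E : Set (Term sig ℕ × Term sig ℕ)}
    (hE : ¬ TrivialVar (Models E)) :
    ∃ M, E ⊆ M ∧ Maximal (fun F => ¬ TrivialVar (Models F)) M := by
  refine zorn_subset_nonempty {F | ¬ TrivialVar (Models F)} ?_ E hE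
  intro c hcS hc hne
  refine ⟨⋃₀ c, ?_, fun F hF => Set.subset_sUnion_of_mem hF⟩
  show ¬ TrivialVar _
  rw [trivialVar_models_iff]
  intro h
  obtain ⟨F, hF, hd⟩ := h.exists_mem_of_sUnion hc hne
  exact hcS hF ((trivialVar_models_iff F).2 hd)

structure IsMinimalVariety (W : Set (Alg sig)) : Prop where
  isVariety : IsVariety W
  nontrivial : ¬ TrivialVar W
  eq_of_subset : ∀ U, IsVariety U → U ⊆ W → ¬ TrivialVar U → U = W

theorem exists_isMinimalVariety_subset {V : Set (Alg sig)} (hV : IsVariety V)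
    (hnontriv : ¬ TrivialVar V) : ∃ W ⊆ V, IsMinimalVariety W := by
  rw [← models_th_of_isVariety hV] at hnontriv ⊢
  obtain ⟨M, hVM, hM⟩ := exists_maximal_nontrivial_models hnontriv
  refine ⟨Models M, models_antitone hVM, ⟨M, rfl⟩, hM.prop, fun U hU hUM hUnt => ?_⟩
  have hMU : M ⊆ Th U := fun e he A hA => hUM hA e he
  rw [← models_th_of_isVariety hU] at hUnt ⊢
  rw [hM.eq_of_subset hUnt hMU]

theorem derivedVariety_nontrivial {V : Set (Alg sig)} (σ : Hyp sig) (hV : ¬ TrivialVar V) :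
    ¬ TrivialVar (derivedVariety V σ) := by
  intro h
  refine hV fun A hA => ?_
  exact h (derive σ A) fun e he => he _ ⟨A, hA, rfl⟩

theorem IsMinimalVariety.fluid {W : Set (Alg sig)} (hW : IsMinimalVariety W) : Fluid W :=
  fun σ hsub => hW.eq_of_subset _ ⟨_, rfl⟩ hsub (derivedVariety_nontrivial σ hW.nontrivial)

end Minimal

/-- Every nontrivial variety contains a nontrivial fluid subvariety. -/
theorem nontrivial_contains_fluid {sig : Signature} (V : Set (Alg sig))
    (hV : IsVariety V) (hnontriv : ¬ TrivialVar V) :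
    ∃ W : Set (Alg sig), IsVariety W ∧ W ⊆ V ∧ ¬ TrivialVar W ∧ Fluid W := by
  obtain ⟨W, hWV, hW⟩ := exists_isMinimalVariety_subset hV hnontriv
  exact ⟨W, hW.isVariety, hWV, hW.nontrivial, hW.fluid⟩
end

section
/- If two hypersubstitutions σ_1 and σ_2 satisfy that σ_1(f_i) = σ_2(f_i) is an identity of a variety V for every operation symbol f_i, then σ_1(p) = σ_2(p) is an identity of V for every term p, and consequently the derived varieties V_{σ_1} and V_{σ_2} coincide. -/
/-! Both claims come from the fact that `A_σ` interprets `fᵢ` by the term operation of `σ(fᵢ)`,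
so `σ(p)` evaluated in `A` is `p` evaluated in `A_σ`, and the hypothesis makes `A_{σ₁} = A_{σ₂}`
for every `A ∈ V`. -/

namespace Alg

variable {sig : Signature}

theorem eval_bind_s4 {V W : Type} (A : Alg sig) (t : Term sig V) (f : V → Term sig W)
    (v : W → A.carrier) : A.eval v (t.bind f) = A.eval (fun x => A.eval v (f x)) t := by
  induction t with
  | var x => rfl
  | app i ts ih => simp only [Term.bind, Alg.eval, ih]

theorem eval_derive {V : Type} (σ : Hyp sig) (A : Alg sig) (v : V → A.carrier)
    (p : Term sig V) : (derive σ A).eval v p = A.eval v (hypApply σ p) := by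
  induction p with
  | var x => rfl
  | app i ts ih =>
    show A.eval (fun k => (derive σ A).eval v (ts k)) (σ i) = _
    simp only [hypApply, eval_bind_s4, ih]

end Alg

theorem eval_hypApply_congr {sig : Signature} {σ₁ σ₂ : Hyp sig} {A : Alg sig}
    (h : ∀ i, ∀ v : Fin (sig.arity i) → A.carrier, A.eval v (σ₁ i) = A.eval v (σ₂ i))
    {V : Type} (v : V → A.carrier) (p : Term sig V) :
    A.eval v (hypApply σ₁ p) = A.eval v (hypApply σ₂ p) := by
  rw [← A.eval_derive, ← A.eval_derive]
  induction p with
  | var x => rfl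
  | app i ts ih => exact (congrArg (A.eval · (σ₁ i)) (funext ih)).trans (h i _)

theorem derive_congr {sig : Signature} {σ₁ σ₂ : Hyp sig} {A : Alg sig}
    (h : ∀ i, ∀ v : Fin (sig.arity i) → A.carrier, A.eval v (σ₁ i) = A.eval v (σ₂ i)) :
    derive σ₁ A = derive σ₂ A := by
  simp only [derive, funext₂ h]

/-- If `σ₁(fᵢ) = σ₂(fᵢ)` is an identity of `V` for every operation symbol,
then `σ₁(p) = σ₂(p)` is an identity of `V` for every term, and `V_{σ₁} = V_{σ₂}`. -/
theorem derived_eq_of_hyp_eq {sig : Signature} (V : Set (Alg sig)) (σ₁ σ₂ : Hyp sig)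
    (h : ∀ i : sig.I, ∀ A ∈ V, ∀ v : Fin (sig.arity i) → A.carrier,
      A.eval v (σ₁ i) = A.eval v (σ₂ i)) :
    (∀ p : Term sig ℕ, ∀ A ∈ V, ∀ v : ℕ → A.carrier,
        A.eval v (hypApply σ₁ p) = A.eval v (hypApply σ₂ p)) ∧
      derivedVariety V σ₁ = derivedVariety V σ₂ := by
  refine ⟨fun p A hA v => eval_hypApply_congr (h · A hA) v p, ?_⟩
  have hgen : {B | ∃ A ∈ V, B = derive σ₁ A} = {B | ∃ A ∈ V, B = derive σ₂ A} := by
    ext B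
    exact exists_congr fun A => and_congr_right fun hA => by rw [derive_congr (h · A hA)]
  rw [derivedVariety, derivedVariety, hgen]
end

section
/- The variety of rectangular bands is not fluid: under the hypersubstitution σ(x·y) = x, the derived variety σ(W_1) is the variety of left-zero semigroups (defined by x·y = x within bands), which is a proper subvariety of W_1. -/
/-- The variety of rectangular bands. -/
def RectBands : Set (Alg sig2) :=
  {A | A ∈ Bands ∧ ∀ x y, bop A (bop A y x) y = y}

/-!
Every derived algebra `A_σ` for `σ(x·y) = x` is a left-zero semigroup, and a left-zero semigroup
is its own derived algebra; since left-zero semigroups form a variety (`x·y = x`), the derived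
variety of rectangular bands is exactly the left-zero variety. The right-zero band on `Bool` is
a rectangular band that is not left-zero, so the inclusion is proper.
-/

theorem subset_varGen {sig : Signature} (K : Set (Alg sig)) : K ⊆ varGen K :=
  fun A hA _ he => he A hA

theorem varGen_subset_of_isVariety {sig : Signature} {K W : Set (Alg sig)} (hW : IsVariety W)
    (hK : K ⊆ W) : varGen K ⊆ W := by
  obtain ⟨E, rfl⟩ := hW
  exact fun _ hA e he => hA e fun _ hB => hK hB e he

theorem not_fluid_of_derivedVariety_ssubset {sig : Signature} {V : Set (Alg sig)} {σ : Hyp sig}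
    (h : derivedVariety V σ ⊂ V) : ¬ Fluid V :=
  fun hV => h.ne (hV σ h.subset)

theorem interp_eq_bop (A : Alg sig2) (f : Fin 2 → A.carrier) :
    A.interp () f = bop A (f 0) (f 1) := by
  unfold bop
  congr 1
  funext k
  fin_cases k <;> rfl

theorem derive_proj1_mem_leftZero (A : Alg sig2) : derive proj1 A ∈ LeftZero :=
  fun _ _ => rfl

theorem derive_proj1_of_mem_leftZero {B : Alg sig2} (hB : B ∈ LeftZero) :
    derive proj1 B = B := by
  obtain ⟨carrier, interp, nonempty⟩ := B
  show Alg.mk carrier _ nonempty = Alg.mk carrier interp nonempty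
  congr 1
  funext i f
  exact ((interp_eq_bop ⟨carrier, interp, nonempty⟩ f).trans (hB _ _)).symm

theorem leftZero_subset_rectBands : LeftZero ⊆ RectBands := by
  intro A (hA : ∀ x y, bop A x y = x)
  exact ⟨⟨fun x y z => by simp only [hA], fun x => hA x x⟩, fun x y => by simp only [hA]⟩

def leftZeroIdentity : Term sig2 ℕ × Term sig2 ℕ :=
  (Term.app () ![Term.var 0, Term.var 1], Term.var 0)

theorem satisfies_leftZeroIdentity_iff (A : Alg sig2) :
    Satisfies A leftZeroIdentity ↔ ∀ x y, bop A x y = x := by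
  have eval_app (v : ℕ → A.carrier) :
      A.eval v leftZeroIdentity.1 = bop A (v 0) (v 1) :=
    interp_eq_bop A _
  exact ⟨fun h x y => (eval_app _).symm.trans (h fun n => if n = 0 then x else y),
    fun h v => (eval_app v).trans (h _ _)⟩

theorem leftZero_isVariety : IsVariety LeftZero := by
  refine ⟨{leftZeroIdentity}, ?_⟩
  ext A
  simp only [Models, Set.mem_singleton_iff, forall_eq, Set.mem_ofPred_eq,
    satisfies_leftZeroIdentity_iff]
  rfl

theorem derivedVariety_rectBands_proj1 : derivedVariety RectBands proj1 = LeftZero := by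
  refine (varGen_subset_of_isVariety leftZero_isVariety ?_).antisymm fun B hB => ?_
  · rintro _ ⟨A, -, rfl⟩
    exact derive_proj1_mem_leftZero A
  · exact subset_varGen _
      ⟨B, leftZero_subset_rectBands hB, (derive_proj1_of_mem_leftZero hB).symm⟩

def rightZeroBool : Alg sig2 := ⟨Bool, fun _ f => f ⟨1, Nat.one_lt_two⟩, ⟨true⟩⟩

theorem leftZero_ssubset_rectBands : LeftZero ⊂ RectBands := by
  have hRZ : rightZeroBool ∈ RectBands :=
    ⟨⟨fun _ _ _ => by rfl, fun _ => by rfl⟩, fun _ _ => by rfl⟩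
  exact ⟨leftZero_subset_rectBands, fun h => Bool.false_ne_true (h hRZ true false)⟩

/-- Rectangular bands are not fluid: the derived variety under the
first projection is the variety of left-zero semigroups, a proper subvariety. -/
theorem rect_bands_not_fluid :
    derivedVariety RectBands proj1 = LeftZero ∧ LeftZero ⊂ RectBands ∧
      ¬ Fluid RectBands := by
  have hproper : derivedVariety RectBands proj1 ⊂ RectBands := by
    rw [derivedVariety_rectBands_proj1]
    exact leftZero_ssubset_rectBands
  exact ⟨derivedVariety_rectBands_proj1, leftZero_ssubset_rectBands,
    not_fluid_of_derivedVariety_ssubset hproper⟩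
end
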